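/- The function F(f) = ∫ |∇f|² dμ + (1/4)∫ φ₀ e^{2f} dμ − β ∫ f dμ on W^{1,2}(X, μ), where μ(X) = V, φ₀ ≥ 0 with ∫ log φ₀ dμ > −∞, and β > 0, satisfies the coercivity estimate: F(f) ≥ λ₁/2 · ∫(f − f̄)² dμ + (V/4)·e^{(1/V)∫log φ₀ dμ}·e^{2f̄} − βV·f̄ − C₀ ≥ (λ₁/2)∫(f − f̄)² dμ + βV|f̄| − C, where f̄ = (1/V)∫ f dμ, λ₁ is the Poincaré constant, and C depends only on V, β, ∫log φ₀ dμ. In particular F is bounded below and coercive in W^{1,2}. -/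
import Mathlib


open MeasureTheory

lemma elem_coercive (a b x : ℝ) (ha : 0 < a) (hb : 0 < b) :
    b * |x| - |b * (1 + Real.log a - Real.log b)| ≤ a * Real.exp (2 * x) - b * x := by
  have habs : b * (1 + Real.log a - Real.log b) ≤ |b * (1 + Real.log a - Real.log b)| :=
    le_abs_self _
  have hexp : b * (1 + (2 * x + Real.log a - Real.log b)) ≤ a * Real.exp (2 * x) := by
    have h1 : (1 : ℝ) + (2 * x + Real.log a - Real.log b)
        ≤ Real.exp (2 * x + Real.log a - Real.log b) := by have := Real.add_one_le_exp (2 * x + Real.log a - Real.log b); linarith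
    have h2 : b * Real.exp (2 * x + Real.log a - Real.log b) = a * Real.exp (2 * x) := by
      rw [show 2 * x + Real.log a - Real.log b = 2 * x + (Real.log a - Real.log b) by ring,
        Real.exp_add, Real.exp_sub, Real.exp_log ha, Real.exp_log hb]
      field_simp
    nlinarith [h1, hb.le]
  rcases le_or_gt 0 x with hx | hx
  · rw [abs_of_nonneg hx]
    nlinarith [neg_abs_le (b * (1 + Real.log a - Real.log b))]
  · rw [abs_of_neg hx]
    nlinarith [mul_pos ha (Real.exp_pos (2 * x)), abs_nonneg (b * (1 + Real.log a - Real.log b))]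

/-- Coercivity of the vortex functional
`F(f) = D(f) + (1/4)∫ φ₀ e^{2f} dμ − β ∫ f dμ` on a space of total volume `V`,
where `D(f) = ∫|∇f|²` is the Dirichlet energy, given the Poincaré inequality
`∫(f − f̄)² ≤ (1/λ₁)D(f)` and Jensen's inequality
`∫ φ₀ e^{2f} ≥ V·exp((1/V)∫log φ₀ + 2f̄)`:
`F(f) ≥ (λ₁/2)∫(f − f̄)² + (V/4)e^{(1/V)∫log φ₀}e^{2f̄} − βV·f̄
      ≥ (λ₁/2)∫(f − f̄)² + βV|f̄| − C`, with the explicit constant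
`C = |βV(1 + log((V/4)e^{(1/V)∫log φ₀}) − log(βV))|`; in particular `F(f) ≥ −C`. -/
theorem vortex_functional_coercivity
    {X : Type*} [MeasurableSpace X] (μ : Measure X)
    (V lam β : ℝ) (hV : 0 < V) (hlam : 0 < lam) (hβ : 0 < β)
    (hμ : (μ Set.univ).toReal = V)
    (φ₀ : X → ℝ) (hφ₀ : ∀ x, 0 ≤ φ₀ x)
    (hlogint : Integrable (fun x => Real.log (φ₀ x)) μ)
    (f : X → ℝ) (hfint : Integrable f μ)
    (hsqint : Integrable (fun x => (f x - (1 / V) * ∫ y, f y ∂μ) ^ 2) μ)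
    (hexpint : Integrable (fun x => φ₀ x * Real.exp (2 * f x)) μ)
    (D : ℝ) (hD : 0 ≤ D)
    (hPoincare : ∫ x, (f x - (1 / V) * ∫ y, f y ∂μ) ^ 2 ∂μ ≤ (1 / lam) * D)
    (hJensen :
      V * Real.exp ((1 / V) * (∫ x, Real.log (φ₀ x) ∂μ) + 2 * ((1 / V) * ∫ y, f y ∂μ))
        ≤ ∫ x, φ₀ x * Real.exp (2 * f x) ∂μ) :
    let fbar : ℝ := (1 / V) * ∫ y, f y ∂μ
    let F : ℝ := D + (1 / 4) * (∫ x, φ₀ x * Real.exp (2 * f x) ∂μ) - β * ∫ x, f x ∂μ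
    let Cconst : ℝ :=
      |β * V * (1 + Real.log ((V / 4) * Real.exp ((1 / V) * ∫ x, Real.log (φ₀ x) ∂μ))
        - Real.log (β * V))|
    (lam / 2 * (∫ x, (f x - fbar) ^ 2 ∂μ)
        + (V / 4) * Real.exp ((1 / V) * ∫ x, Real.log (φ₀ x) ∂μ) * Real.exp (2 * fbar)
        - β * V * fbar ≤ F) ∧
    (lam / 2 * (∫ x, (f x - fbar) ^ 2 ∂μ) + β * V * |fbar| - Cconst ≤ F) ∧
    (-Cconst ≤ F) := by
  intro fbar F Cconst
  set A := (1 / V) * ∫ x, Real.log (φ₀ x) ∂μ with hA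
  set I := ∫ x, (f x - fbar) ^ 2 ∂μ with hI
  have hI0 : 0 ≤ I := integral_nonneg fun x => sq_nonneg _
  have hDI : lam * I ≤ D := by
    have := hPoincare
    rw [div_mul_eq_mul_div, le_div_iff₀ hlam] at this
    · linarith [this]
  have hint : ∫ x, f x ∂μ = V * fbar := by
    simp only [fbar]; field_simp
  have ha : 0 < (V / 4) * Real.exp A := by positivity
  have hb : 0 < β * V := mul_pos hβ hV
  have hJ : (V / 4) * Real.exp A * Real.exp (2 * fbar)
      ≤ (1 / 4) * ∫ x, φ₀ x * Real.exp (2 * f x) ∂μ := by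
    have h2 : V * Real.exp (A + 2 * fbar) = 4 * ((V / 4) * Real.exp A * Real.exp (2 * fbar)) := by
      rw [Real.exp_add]; ring
    have := hJensen
    rw [h2] at this
    linarith
  have h1 : lam / 2 * I + (V / 4) * Real.exp A * Real.exp (2 * fbar) - β * V * fbar ≤ F := by
    simp only [F, hint]
    nlinarith [hJ, hDI, hI0, hlam.le]
  refine ⟨h1, ?_, ?_⟩
  · have he := elem_coercive ((V / 4) * Real.exp A) (β * V) fbar ha hb
    have hC : Cconst = |β * V * (1 + Real.log ((V / 4) * Real.exp A) - Real.log (β * V))| := rfl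
    rw [hC] at *
    linarith
  · have he := elem_coercive ((V / 4) * Real.exp A) (β * V) fbar ha hb
    have hC : Cconst = |β * V * (1 + Real.log ((V / 4) * Real.exp A) - Real.log (β * V))| := rfl
    rw [hC]
    nlinarith [mul_nonneg hb.le (abs_nonneg fbar), mul_nonneg (by linarith : (0:ℝ) ≤ lam / 2) hI0]
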